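/- arXiv:2411.12208 — 2 statements merged into one kernel-verified Lean document; each statement's English description precedes it below -/
import Mathlib

section
/- Let n = 4m with m ≥ 2, and let |ψ⟩ be an n-qubit pure state. For every subset A of the parties with |A| = 2m+1, there exists a (2m)-subset B ⊆ A such that the reduction of |ψ⟩⟨ψ| to B is not maximally mixed. -/
/-- Combine an assignment on `S` and on its complement into a full assignment. -/
def glue {n : ℕ} (S : Finset (Fin n)) (a : {x // x ∈ S} → Fin 2)
    (b : {x // x ∈ Sᶜ} → Fin 2) : Fin n → Fin 2 :=
  fun i => if h : i ∈ S then a ⟨i, h⟩ else b ⟨i, Finset.mem_compl.mpr h⟩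

/-- The reduced density matrix of the pure state `ψ` on the set of qubits `S`
(partial trace of `|ψ⟩⟨ψ|` over the qubits outside `S`). -/
noncomputable def reduced {n : ℕ} (ψ : (Fin n → Fin 2) → ℂ) (S : Finset (Fin n)) :
    Matrix ({x // x ∈ S} → Fin 2) ({x // x ∈ S} → Fin 2) ℂ :=
  Matrix.of fun a b => ∑ c : {x // x ∈ Sᶜ} → Fin 2,
    ψ (glue S a c) * star (ψ (glue S b c))

/-- The reduction of `ψ` to `S` is maximally mixed, i.e. `ρ_S = I / 2^|S|`. -/
def IsMaxMixed {n : ℕ} (ψ : (Fin n → Fin 2) → ℂ) (S : Finset (Fin n)) : Prop :=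
  reduced ψ S = ((2 : ℂ) ^ S.card)⁻¹ • 1

/-!
Suppose every `2m`-subset of `A` were maximally mixed. For `i ∈ A`, the set `A \ {i}` is half of
the system, so its complement is maximally mixed too (`ρ_S = M Mᴴ` and `ρ_{Sᶜ}ᵀ = Mᴴ M` for the
`2^{2m} × 2^{2m}` coefficient matrix `M` of `ψ`); hence so is its subset `Aᶜ`, and then
`ρ_A² = 2^{1-2m} ρ_A`.

Expand `ρ_A` in Pauli strings. Every string that is the identity on some qubit of `A` sees only a
maximally mixed marginal, so `2^{|A|} ρ_A = 1 + X` with `X` a combination of full-weight strings,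
and `(1 + X)² = 4 (1 + X)`. Since `|A|` is odd, `tr (P_r P_s P_t) = -tr (P_r P_t P_s)` for
full-weight `r, s, t`, so `X²` has no full-weight component. Comparing full-weight components
gives `2 X = 4 X`, so `X = 0` and `1 = 4`.
-/

open Finset Matrix

section PiKron
variable {ι κ R : Type*} [Fintype ι] [CommSemiring R]

def piKron (M : ι → Matrix κ κ R) : Matrix (ι → κ) (ι → κ) R :=
  of fun a b => ∏ i, M i (a i) (b i)

lemma piKron_apply (M : ι → Matrix κ κ R) (a b : ι → κ) :
    piKron M a b = ∏ i, M i (a i) (b i) := rfl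

lemma piKron_mul_piKron [DecidableEq ι] [Fintype κ] (M N : ι → Matrix κ κ R) :
    piKron M * piKron N = piKron fun i => M i * N i := by
  ext a b
  simp only [mul_apply, piKron_apply, Fintype.prod_sum, ← prod_mul_distrib]

lemma trace_piKron [DecidableEq ι] [Fintype κ] (M : ι → Matrix κ κ R) :
    trace (piKron M) = ∏ i, trace (M i) := by
  simp only [trace, diag_apply, piKron_apply, Fintype.prod_sum]

lemma piKron_one [DecidableEq κ] : piKron (fun _ : ι => (1 : Matrix κ κ R)) = 1 := by
  ext a b
  simp only [piKron_apply, one_apply, Fintype.prod_boole, funext_iff]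

end PiKron

def pauli : Fin 4 → Matrix (Fin 2) (Fin 2) ℂ
  | 0 => 1
  | 1 => !![0, 1; 1, 0]
  | 2 => !![0, -Complex.I; Complex.I, 0]
  | 3 => !![1, 0; 0, -1]

lemma trace_pauli {x : Fin 4} (hx : x ≠ 0) : trace (pauli x) = 0 := by
  fin_cases x <;> simp_all [pauli, trace_fin_two]

lemma trace_pauli_mul_pauli (x y : Fin 4) :
    trace (pauli x * pauli y) = if x = y then 2 else 0 := by
  fin_cases x <;> fin_cases y <;> simp [pauli, trace_fin_two] <;> norm_num

lemma sum_pauli_apply_mul_pauli_apply (a b c d : Fin 2) :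
    ∑ x, pauli x a b * pauli x c d = if a = d ∧ b = c then 2 else 0 := by
  fin_cases a <;> fin_cases b <;> fin_cases c <;> fin_cases d <;>
    simp [pauli, Fin.sum_univ_four] <;> norm_num

lemma trace_pauli_mul_pauli_mul_pauli_swap {x y z : Fin 4} (hx : x ≠ 0) (hy : y ≠ 0)
    (hz : z ≠ 0) :
    trace (pauli x * pauli y * pauli z) = -trace (pauli x * pauli z * pauli y) := by
  fin_cases x <;> fin_cases y <;> fin_cases z <;> simp_all [pauli, trace_fin_two]

section PauliString
variable {ι : Type*} [Fintype ι]

noncomputable def pauliString (s : ι → Fin 4) : Matrix (ι → Fin 2) (ι → Fin 2) ℂ :=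
  piKron fun i => pauli (s i)

lemma pauliString_zero : pauliString (0 : ι → Fin 4) = 1 := piKron_one

variable [DecidableEq ι]

noncomputable def pauliCoeff (ρ : Matrix (ι → Fin 2) (ι → Fin 2) ℂ) (s : ι → Fin 4) :
    ℂ :=
 
  trace (pauliString s * ρ)

def fullWeight : Finset (ι → Fin 4) := univ.filter fun s => ∀ i, s i ≠ 0

lemma mem_fullWeight {s : ι → Fin 4} : s ∈ fullWeight ↔ ∀ i, s i ≠ 0 := by
  simp [fullWeight]

lemma trace_pauliString (s : ι → Fin 4) :
    trace (pauliString s) = if s = 0 then 2 ^ Fintype.card ι else 0 := by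
  split_ifs with hs
  · simp [hs, pauliString_zero]
  · obtain ⟨i, hi⟩ := Function.ne_iff.mp hs
    rw [pauliString, trace_piKron]
    exact prod_eq_zero (mem_univ i) (trace_pauli hi)

lemma trace_pauliString_mul_pauliString (s t : ι → Fin 4) :
    trace (pauliString s * pauliString t) = if s = t then 2 ^ Fintype.card ι else 0 := by
  simp only [pauliString, piKron_mul_piKron, trace_piKron, trace_pauli_mul_pauli,
    Fintype.prod_ite_zero, prod_const, card_univ, funext_iff]

lemma sum_pauliString_apply_mul_pauliString_apply (u v a b : ι → Fin 2) :
    ∑ s : ι → Fin 4, pauliString s u v * pauliString s a b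
      = if u = b ∧ v = a then 2 ^ Fintype.card ι else 0 := by
  simp only [pauliString, piKron_apply, ← prod_mul_distrib]
  rw [← Fintype.prod_sum fun i x => pauli x (u i) (v i) * pauli x (a i) (b i)]
  simp only [sum_pauli_apply_mul_pauli_apply, Fintype.prod_ite_zero, prod_const, card_univ,
    funext_iff, forall_and]

lemma sum_pauliCoeff_smul_pauliString (ρ : Matrix (ι → Fin 2) (ι → Fin 2) ℂ) :
    ∑ s, pauliCoeff ρ s • pauliString s = (2 : ℂ) ^ Fintype.card ι • ρ := by
  ext a b
  calc (∑ s, pauliCoeff ρ s • pauliString s) a b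
      = ∑ u, ∑ v, ρ v u * ∑ s, pauliString s u v * pauliString s a b := by
        simp only [Matrix.sum_apply, Matrix.smul_apply, smul_eq_mul, pauliCoeff, trace,
          diag_apply, mul_apply, sum_mul, mul_sum]
        rw [sum_comm]
        refine sum_congr rfl fun u _ => sum_comm.trans (sum_congr rfl fun v _ => ?_)
        exact sum_congr rfl fun s _ => by ring
    _ = ((2 : ℂ) ^ Fintype.card ι • ρ) a b := by
        simp [sum_pauliString_apply_mul_pauliString_apply, ite_and, mul_comm]

lemma eq_inv_smul_one_iff_pauliCoeff (ρ : Matrix (ι → Fin 2) (ι → Fin 2) ℂ) :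
    ρ = ((2 : ℂ) ^ Fintype.card ι)⁻¹ • 1 ↔
      ∀ s, pauliCoeff ρ s = if s = 0 then 1 else 0 := by
  have hN : (2 : ℂ) ^ Fintype.card ι ≠ 0 := pow_ne_zero _ two_ne_zero
  constructor
  · rintro rfl s
    rw [pauliCoeff, Matrix.mul_smul, Matrix.mul_one, trace_smul, trace_pauliString, smul_eq_mul,
      mul_ite, inv_mul_cancel₀ hN, mul_zero]
  · intro h
    rw [eq_inv_smul_iff₀ hN, ← sum_pauliCoeff_smul_pauliString]
    simp [h, pauliString_zero]

lemma trace_pauliString_mul_mul_swap (hodd : Odd (Fintype.card ι)) {r s t : ι → Fin 4}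
    (hr : r ∈ fullWeight) (hs : s ∈ fullWeight) (ht : t ∈ fullWeight) :
    trace (pauliString r * pauliString s * pauliString t)
      = -trace (pauliString r * pauliString t * pauliString s) := by
  rw [mem_fullWeight] at hr hs ht
  simp only [pauliString, piKron_mul_piKron, trace_piKron,
    trace_pauli_mul_pauli_mul_pauli_swap (hr _) (hs _) (ht _)]
  rw [prod_neg, card_univ, hodd.neg_one_pow, neg_one_mul]

end PauliString

section Parity
variable {ι : Type*} [Fintype ι] [DecidableEq ι]

lemma zero_notMem_fullWeight [Nonempty ι] : (0 : ι → Fin 4) ∉ fullWeight := fun h =>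
  mem_fullWeight.mp h (Classical.arbitrary ι) rfl

lemma two_pow_smul_eq_one_add_of_pauliCoeff [Nonempty ι]
    (ρ : Matrix (ι → Fin 2) (ι → Fin 2) ℂ)
    (hmarg : ∀ s ∉ fullWeight, pauliCoeff ρ s = if s = 0 then 1 else 0) :
    (2 : ℂ) ^ Fintype.card ι • ρ
      = 1 + ∑ s ∈ fullWeight, pauliCoeff ρ s • pauliString s := by
  rw [← sum_pauliCoeff_smul_pauliString, ← sum_compl_add_sum fullWeight]
  congr 1
  rw [sum_eq_single_of_mem 0 (mem_compl.mpr zero_notMem_fullWeight)]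
  · simp [hmarg 0 zero_notMem_fullWeight, pauliString_zero]
  · intro s hs hs0
    simp [hmarg s (mem_compl.mp hs), hs0]

lemma trace_pauliString_mul_sum_fullWeight (c : (ι → Fin 4) → ℂ) {r : ι → Fin 4}
    (hr : r ∈ fullWeight) :
    trace (pauliString r * ∑ s ∈ fullWeight, c s • pauliString s)
      = 2 ^ Fintype.card ι * c r := by
  simp only [mul_sum, mul_smul_comm, trace_sum, trace_smul, smul_eq_mul,
    trace_pauliString_mul_pauliString]
  rw [sum_eq_single_of_mem r hr fun s _ hs => by simp [Ne.symm hs]]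
  simp [mul_comm]

lemma trace_pauliString_mul_sq_eq_zero (hodd : Odd (Fintype.card ι)) (c : (ι → Fin 4) → ℂ)
    {r : ι → Fin 4} (hr : r ∈ fullWeight) :
    trace (pauliString r * ((∑ s ∈ fullWeight, c s • pauliString s)
      * ∑ s ∈ fullWeight, c s • pauliString s)) = 0 := by
  set f : (ι → Fin 4) → (ι → Fin 4) → ℂ :=
    fun s t => c s * c t * trace (pauliString r * pauliString s * pauliString t)
  have hf : ∀ s ∈ fullWeight, ∀ t ∈ fullWeight, f s t = -f t s := fun s hs t ht => by
    simp only [f, trace_pauliString_mul_mul_swap hodd hr hs ht]; ring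
  have hsum : trace (pauliString r * ((∑ s ∈ fullWeight, c s • pauliString s)
      * ∑ s ∈ fullWeight, c s • pauliString s))
        = ∑ s ∈ fullWeight, ∑ t ∈ fullWeight, f s t := by
    rw [sum_mul_sum]
    simp only [Matrix.smul_mul, Matrix.mul_smul, mul_sum, trace_sum, trace_smul, smul_eq_mul, f,
      mul_assoc]
    exact sum_congr rfl fun _ _ => sum_congr rfl fun _ _ => mul_left_comm _ _ _
  rw [hsum, ← CharZero.eq_neg_self_iff]
  nth_rw 2 [sum_comm]
  rw [← sum_neg_distrib]
  exact sum_congr rfl fun s hs => by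
    rw [← sum_neg_distrib]; exact sum_congr rfl fun t ht => hf s hs t ht

theorem mul_self_ne_of_pauliCoeff_eq_of_odd (hodd : Odd (Fintype.card ι))
    (ρ : Matrix (ι → Fin 2) (ι → Fin 2) ℂ)
    (hmarg : ∀ s ∉ fullWeight, pauliCoeff ρ s = if s = 0 then 1 else 0) :
    ρ * ρ ≠ (4 / 2 ^ Fintype.card ι : ℂ) • ρ := by
  intro hsq
  have : Nonempty ι := Fintype.card_pos_iff.mp hodd.pos
  set N : ℂ := 2 ^ Fintype.card ι
  have hN : N ≠ 0 := pow_ne_zero _ two_ne_zero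
  set X := ∑ s ∈ fullWeight, pauliCoeff ρ s • pauliString s
  have hexp : N • ρ = 1 + X := two_pow_smul_eq_one_add_of_pauliCoeff ρ hmarg
  have hcoeff : ∀ r ∈ fullWeight, pauliCoeff ρ r = 0 := by
    intro r hr
    have h4 : trace (pauliString r * ((N • ρ) * (N • ρ))) = 4 * N * pauliCoeff ρ r := by
      rw [smul_mul_smul, hsq, smul_smul, Matrix.mul_smul, trace_smul, smul_eq_mul, pauliCoeff]
      field_simp
    have h2 : trace (pauliString r * ((N • ρ) * (N • ρ))) = 2 * N * pauliCoeff ρ r := by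
      have hsq' : (1 + X) * (1 + X) = 1 + X + X + X * X := by noncomm_ring
      rw [hexp, hsq', Matrix.mul_add, Matrix.mul_add, Matrix.mul_add, Matrix.mul_one, trace_add,
        trace_add, trace_add, trace_pauliString_mul_sq_eq_zero hodd _ hr, trace_pauliString,
        if_neg (ne_of_mem_of_not_mem hr zero_notMem_fullWeight),
        trace_pauliString_mul_sum_fullWeight _ hr]
      ring
    have : 2 * N * pauliCoeff ρ r = 0 := by linear_combination h2 - h4
    simpa [hN] using this
  have hX0 : X = 0 := sum_eq_zero fun r hr => by rw [hcoeff r hr, zero_smul]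
  rw [hX0, add_zero] at hexp
  have h14 : (1 : Matrix (ι → Fin 2) (ι → Fin 2) ℂ) = (4 : ℂ) • 1 :=
    calc 1 = (N • ρ) * (N • ρ) := by rw [hexp, Matrix.mul_one]
      _ = (4 : ℂ) • (N • ρ) := by
        rw [smul_mul_smul, hsq, smul_smul, smul_smul]
        field_simp
      _ = (4 : ℂ) • 1 := by rw [hexp]
  have := congrFun₂ h14 0 0
  norm_num at this

end Parity

section Reduced
variable {n : ℕ}

def glueEquiv (S : Finset (Fin n)) :
    ({x // x ∈ S} → Fin 2) × ({x // x ∈ Sᶜ} → Fin 2) ≃ (Fin n → Fin 2) where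
  toFun p := glue S p.1 p.2
  invFun f := (fun j => f j, fun j => f j)
  left_inv p := by
    ext j
    · simp [glue, j.2]
    · simp [glue, mem_compl.mp j.2]
  right_inv f := by
    funext j
    by_cases h : j ∈ S <;> simp [glue, h]

def stateMatrix (ψ : (Fin n → Fin 2) → ℂ) (S : Finset (Fin n)) :
    Matrix ({x // x ∈ S} → Fin 2) ({x // x ∈ Sᶜ} → Fin 2) ℂ :=
  of fun a c => ψ (glue S a c)

variable (ψ : (Fin n → Fin 2) → ℂ)

lemma reduced_eq_stateMatrix_mul_conjTranspose (S : Finset (Fin n)) :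
    reduced ψ S = stateMatrix ψ S * (stateMatrix ψ S)ᴴ := by
  ext a b
  simp [reduced, stateMatrix, mul_apply]

lemma conjTranspose_stateMatrix_mul_stateMatrix (S : Finset (Fin n)) :
    (stateMatrix ψ S)ᴴ * stateMatrix ψ S = (reduced ψ Sᶜ)ᵀ := by
  have hmem (x : Fin n) : x ∈ Sᶜᶜ ↔ x ∈ S := by simp
  let e : ({x // x ∈ Sᶜᶜ} → Fin 2) ≃ ({x // x ∈ S} → Fin 2) :=
    Equiv.piCongrLeft' _ (Equiv.subtypeEquivRight hmem)
  have hglue (a : {x // x ∈ Sᶜᶜ} → Fin 2) (c : {x // x ∈ Sᶜ} → Fin 2) :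
      glue Sᶜ c a = glue S (e a) c := by
    funext i
    by_cases h : i ∈ S <;> simp [glue, h, e]; rfl
  ext c d
  simp only [mul_apply, conjTranspose_apply, stateMatrix, of_apply, transpose_apply, reduced]
  exact (Fintype.sum_equiv e _ _ fun a => by rw [hglue, hglue, mul_comm]).symm

variable {ψ} in
lemma IsMaxMixed.compl {S : Finset (Fin n)} (h : IsMaxMixed ψ S) (hcard : S.card = Sᶜ.card) :
    IsMaxMixed ψ Sᶜ := by
  set M := stateMatrix ψ S
  have hN : (2 : ℂ) ^ S.card ≠ 0 := pow_ne_zero _ two_ne_zero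
  have hright : M * ((2 : ℂ) ^ S.card • Mᴴ) = 1 := by
    rw [Matrix.mul_smul, ← reduced_eq_stateMatrix_mul_conjTranspose, h, smul_smul,
      mul_inv_cancel₀ hN, one_smul]
  have hleft := (mul_eq_one_comm_of_card_eq _ _ _
    (by simp only [Fintype.card_fun, Fintype.card_coe, Fintype.card_fin, hcard])).mp hright
  rw [Matrix.smul_mul, conjTranspose_stateMatrix_mul_stateMatrix] at hleft
  rw [IsMaxMixed, ← hcard, ← transpose_transpose (reduced ψ Sᶜ),
    eq_inv_smul_iff₀ hN, ← transpose_smul, hleft, transpose_one]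

variable {ψ} in
lemma reduced_mul_self_of_isMaxMixed_compl {S : Finset (Fin n)} (h : IsMaxMixed ψ Sᶜ) :
    reduced ψ S * reduced ψ S = ((2 : ℂ) ^ Sᶜ.card)⁻¹ • reduced ψ S := by
  rw [reduced_eq_stateMatrix_mul_conjTranspose, Matrix.mul_assoc,
    ← Matrix.mul_assoc _ (stateMatrix ψ S), conjTranspose_stateMatrix_mul_stateMatrix, h,
    transpose_smul, transpose_one,
    Matrix.smul_mul, Matrix.one_mul, Matrix.mul_smul]

end Reduced

section Marginal
variable {n : ℕ}

def extendByZero (S : Finset (Fin n)) (s : {x // x ∈ S} → Fin 4) : Fin n → Fin 4 :=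
  fun i => if h : i ∈ S then s ⟨i, h⟩ else 0

lemma pauliString_extendByZero_glue (S : Finset (Fin n)) (s : {x // x ∈ S} → Fin 4)
    (a b : {x // x ∈ S} → Fin 2) (c d : {x // x ∈ Sᶜ} → Fin 2) :
    pauliString (extendByZero S s) (glue S a c) (glue S b d)
      = pauliString s a b * (1 : Matrix ({x // x ∈ Sᶜ} → Fin 2) _ ℂ) c d := by
  rw [← pauliString_zero]
  simp only [pauliString, piKron_apply]
  rw [← prod_mul_prod_compl S, ← prod_coe_sort S, ← prod_coe_sort Sᶜ]
  congr 1 <;> refine prod_congr rfl fun j _ => ?_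
  · simp [extendByZero, glue, j.2]
  · simp [extendByZero, glue, mem_compl.mp j.2]

variable (ψ : (Fin n → Fin 2) → ℂ)

lemma pauliCoeff_reduced (S : Finset (Fin n)) (s : {x // x ∈ S} → Fin 4) :
    pauliCoeff (reduced ψ S) s = star ψ ⬝ᵥ (pauliString (extendByZero S s) *ᵥ ψ) := by
  simp only [dotProduct, mulVec, ← (glueEquiv S).sum_comp, Fintype.sum_prod_type]
  simp only [glueEquiv, Equiv.coe_fn_mk, pauliString_extendByZero_glue, one_apply, mul_ite,
    mul_one, mul_zero, ite_mul, zero_mul, sum_ite_eq, mem_univ, if_true, Pi.star_apply]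
  simp only [pauliCoeff, reduced, trace, diag_apply, mul_apply, of_apply, mul_sum]
  refine sum_congr rfl fun a _ => sum_comm.trans (sum_congr rfl fun c _ => ?_)
  exact sum_congr rfl fun b _ => by ring

lemma restrict_eq_zero_iff {S T : Finset (Fin n)} (hTS : T ⊆ S) (s : {x // x ∈ S} → Fin 4)
    (hs : ∀ j : {x // x ∈ S}, (j : Fin n) ∉ T → s j = 0) :
    (fun j : {x // x ∈ T} => s ⟨j, hTS j.2⟩) = 0 ↔ s = 0 := by
  refine ⟨fun h => funext fun j => ?_, fun h => by subst h; rfl⟩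
  by_cases hj : (j : Fin n) ∈ T
  · exact congrFun h ⟨j, hj⟩
  · exact hs j hj

lemma pauliCoeff_reduced_of_subset {S T : Finset (Fin n)} (hTS : T ⊆ S)
    (s : {x // x ∈ S} → Fin 4) (hs : ∀ j : {x // x ∈ S}, (j : Fin n) ∉ T → s j = 0) :
    pauliCoeff (reduced ψ S) s = pauliCoeff (reduced ψ T) fun j => s ⟨j, hTS j.2⟩ := by
  rw [pauliCoeff_reduced, pauliCoeff_reduced]
  congr 3
  funext i
  by_cases hiT : i ∈ T
  · simp [extendByZero, hiT, hTS hiT]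
  · by_cases hiS : i ∈ S
    · simp [extendByZero, hiT, hiS, hs ⟨i, hiS⟩ hiT]
    · simp [extendByZero, hiT, hiS]

lemma isMaxMixed_iff_pauliCoeff (S : Finset (Fin n)) :
    IsMaxMixed ψ S ↔ ∀ s, pauliCoeff (reduced ψ S) s = if s = 0 then 1 else 0 := by
  rw [IsMaxMixed, ← Fintype.card_coe S, eq_inv_smul_one_iff_pauliCoeff]

variable {ψ}

lemma IsMaxMixed.mono {S T : Finset (Fin n)} (h : IsMaxMixed ψ S) (hTS : T ⊆ S) :
    IsMaxMixed ψ T := by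
  rw [isMaxMixed_iff_pauliCoeff] at h ⊢
  intro s
  set s' : {x // x ∈ S} → Fin 4 := fun j => extendByZero T s j
  have hs' (j : {x // x ∈ S}) (hj : (j : Fin n) ∉ T) : s' j = 0 := by
    simp [s', extendByZero, hj]
  have hres : (fun j : {x // x ∈ T} => s' ⟨j, hTS j.2⟩) = s := by
    funext j; simp [s', extendByZero, j.2]
  rw [← hres, ← pauliCoeff_reduced_of_subset ψ hTS s' hs', h]
  exact if_congr (restrict_eq_zero_iff hTS s' hs').symm rfl rfl

lemma pauliCoeff_reduced_of_isMaxMixed_of_subset {S T : Finset (Fin n)} (hT : IsMaxMixed ψ T)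
    (hTS : T ⊆ S) (s : {x // x ∈ S} → Fin 4)
    (hs : ∀ j : {x // x ∈ S}, (j : Fin n) ∉ T → s j = 0) :
    pauliCoeff (reduced ψ S) s = if s = 0 then 1 else 0 := by
  rw [pauliCoeff_reduced_of_subset ψ hTS s hs, (isMaxMixed_iff_pauliCoeff ψ T).mp hT]
  exact if_congr (restrict_eq_zero_iff hTS s hs) rfl rfl

end Marginal

lemma pauliCoeff_reduced_of_forall_isMaxMixed_erase {n : ℕ} {ψ : (Fin n → Fin 2) → ℂ}
    {A : Finset (Fin n)} (h : ∀ i ∈ A, IsMaxMixed ψ (A.erase i)) :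
    ∀ s ∉ fullWeight, pauliCoeff (reduced ψ A) s = if s = 0 then 1 else 0 := by
  intro s hs
  obtain ⟨i, hi⟩ : ∃ i, s i = 0 := by simpa [mem_fullWeight] using hs
  refine pauliCoeff_reduced_of_isMaxMixed_of_subset (h i i.2) (erase_subset _ _) s
    fun j hj => ?_
  rwa [show j = i from Subtype.ext (by simpa [j.2] using hj)]

theorem stmt14_general (m : ℕ)
    (ψ : (Fin (4 * m) → Fin 2) → ℂ)
    (A : Finset (Fin (4 * m))) (hA : A.card = 2 * m + 1) :
    ∃ B ⊆ A, B.card = 2 * m ∧ ¬ IsMaxMixed ψ B := by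
  by_contra! h
  have herase : ∀ i ∈ A, IsMaxMixed ψ (A.erase i) := fun i hi =>
    h _ (erase_subset i A) (by rw [card_erase_of_mem hi, hA, Nat.add_sub_cancel])
  have hle : A.card ≤ 4 * m := by simpa using card_le_univ A
  obtain ⟨i, hi⟩ : A.Nonempty := card_pos.mp (by omega)
  have hhalf : (A.erase i).card = (A.erase i)ᶜ.card := by
    rw [card_compl, card_erase_of_mem hi, hA, Fintype.card_fin]; omega
  have hcompl : IsMaxMixed ψ Aᶜ :=
    ((herase i hi).compl hhalf).mono (compl_subset_compl.mpr (erase_subset i A))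
  have hodd : Odd (Fintype.card A) := by rw [Fintype.card_coe, hA]; exact odd_two_mul_add_one m
  refine mul_self_ne_of_pauliCoeff_eq_of_odd hodd _
    (pauliCoeff_reduced_of_forall_isMaxMixed_erase herase) ?_
  rw [reduced_mul_self_of_isMaxMixed_compl hcompl, Fintype.card_coe, card_compl, hA,
    Fintype.card_fin]
  obtain ⟨k, rfl⟩ : ∃ k, m = k + 1 := ⟨m - 1, by omega⟩
  rw [show 4 * (k + 1) - (2 * (k + 1) + 1) = 2 * k + 1 by omega]
  congr 1
  field_simp
  ring

/-- For an `n = 4m`-qubit pure state with `m ≥ 2`: every `(2m+1)`-set of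
parties `A` contains a `2m`-subset `B` whose reduction is not maximally mixed. -/
theorem stmt14 (m : ℕ) (hm : 2 ≤ m)
    (ψ : (Fin (4 * m) → Fin 2) → ℂ)
    (hψ : ∑ c : Fin (4 * m) → Fin 2, ‖ψ c‖ ^ 2 = 1)
    (A : Finset (Fin (4 * m))) (hA : A.card = 2 * m + 1) :
    ∃ B ⊆ A, B.card = 2 * m ∧ ¬ IsMaxMixed ψ B :=
  stmt14_general m ψ A hA
end

section
/- Let |ψ⟩ be an n-qubit pure state and s < k ≤ ⌊n/2⌋. If the number of k-subsets K ⊆ [n] whose reduction ρ_K is maximally mixed exceeds C(n,k) − C(n−s, k−s), then every s-party reduction of |ψ⟩ is maximally mixed (i.e., |ψ⟩ is s-uniform). -/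
/-!
A `k`-set can only have a maximally mixed reduction if all of its subsets do, since partial traces
of `I / 2^k` are again maximally mixed. Enlarge a set of at most `s` qubits to an `s`-set `S`:
exactly `C(n-s, k-s)` of the `k`-sets contain `S`, so a family of more than
`C(n,k) - C(n-s,k-s)` maximally mixed `k`-sets must contain one of them.
-/

open Finset

theorem Finset.exists_superset_mem_of_card_lt {α : Type*} [Fintype α] [DecidableEq α]
    {F : Finset (Finset α)} {k : ℕ} (hF : ∀ K ∈ F, #K = k) {S : Finset α} (hSk : #S ≤ k)
    (h : (Fintype.card α).choose k - (Fintype.card α - #S).choose (k - #S) < #F) :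
    ∃ K ∈ F, S ⊆ K := by
  set P := (univ : Finset α).powersetCard k
  have hFP : F ⊆ P := fun K hK => mem_powersetCard.2 ⟨subset_univ K, hF K hK⟩
  have hcard : #(P.filter (S ⊆ ·)) = (Fintype.card α - #S).choose (k - #S) := by
    rw [card_filter_powersetCard_subset S univ k (subset_univ S) hSk, card_univ]
  have hP : #P = (Fintype.card α).choose k := by rw [card_powersetCard, card_univ]
  have hle : #(P.filter (S ⊆ ·)) ≤ #P := card_le_card (filter_subset _ P)
  obtain ⟨K, hK⟩ :=
    inter_nonempty_of_card_lt_card_add_card hFP (filter_subset (S ⊆ ·) P) (by omega)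
  exact ⟨K, (mem_inter.1 hK).1, (mem_filter.1 (mem_inter.1 hK).2).2⟩

section PartialTrace

variable {n : ℕ} {S K : Finset (Fin n)}

def extendAssignment (a : {x // x ∈ S} → Fin 2) (d : {x // x ∈ K \ S} → Fin 2) :
    {x // x ∈ K} → Fin 2 :=
  fun x => if h : x.1 ∈ S then a ⟨x.1, h⟩ else d ⟨x.1, mem_sdiff.2 ⟨x.2, h⟩⟩

theorem extendAssignment_left_inj (hSK : S ⊆ K) {a b : {x // x ∈ S} → Fin 2}
    (d : {x // x ∈ K \ S} → Fin 2) :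
    extendAssignment a d = extendAssignment b d ↔ a = b := by
  refine ⟨fun hab => funext fun x => ?_, fun hab => hab ▸ rfl⟩
  simpa [extendAssignment, x.2] using congrFun hab ⟨x.1, hSK x.2⟩

def complSplitEquiv (hSK : S ⊆ K) :
    (({x // x ∈ K \ S} → Fin 2) × ({x // x ∈ Kᶜ} → Fin 2)) ≃ ({x // x ∈ Sᶜ} → Fin 2) where
  toFun p x :=
    if h : x.1 ∈ K then p.1 ⟨x.1, mem_sdiff.2 ⟨h, mem_compl.1 x.2⟩⟩
    else p.2 ⟨x.1, mem_compl.2 h⟩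
  invFun c :=
    (fun x => c ⟨x.1, mem_compl.2 (mem_sdiff.1 x.2).2⟩,
     fun x => c ⟨x.1, mem_compl.2 fun hS => mem_compl.1 x.2 (hSK hS)⟩)
  left_inv p := by
    refine Prod.ext (funext fun x => ?_) (funext fun x => ?_)
    · simp only [dif_pos (mem_sdiff.1 x.2).1]
    · simp only [dif_neg (mem_compl.1 x.2)]
  right_inv c := by
    funext x
    dsimp only
    split <;> rfl

theorem glue_complSplitEquiv (hSK : S ⊆ K) (a : {x // x ∈ S} → Fin 2)
    (d : {x // x ∈ K \ S} → Fin 2) (e : {x // x ∈ Kᶜ} → Fin 2) :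
    glue S a (complSplitEquiv hSK (d, e)) = glue K (extendAssignment a d) e := by
  funext i
  by_cases hiS : i ∈ S
  · simp [glue, extendAssignment, hiS, hSK hiS]
  · by_cases hiK : i ∈ K <;> simp [glue, complSplitEquiv, extendAssignment, hiS, hiK]

theorem reduced_eq_sum_reduced (ψ : (Fin n → Fin 2) → ℂ) (hSK : S ⊆ K)
    (a b : {x // x ∈ S} → Fin 2) :
    reduced ψ S a b =
      ∑ d : {x // x ∈ K \ S} → Fin 2, reduced ψ K (extendAssignment a d) (extendAssignment b d) := by
  simp only [reduced, Matrix.of_apply]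
  rw [← (complSplitEquiv hSK).sum_comp, Fintype.sum_prod_type]
  simp only [glue_complSplitEquiv]

theorem IsMaxMixed.mono_s16 {ψ : (Fin n → Fin 2) → ℂ} (hSK : S ⊆ K) (hK : IsMaxMixed ψ K) :
    IsMaxMixed ψ S := by
  have hcard : #S ≤ #K := card_le_card hSK
  have hpow : (2 : ℂ) ^ #K = 2 ^ (#K - #S) * 2 ^ #S := by rw [← pow_add, Nat.sub_add_cancel hcard]
  ext a b
  rw [reduced_eq_sum_reduced ψ hSK, hK]
  simp only [Matrix.smul_apply, Matrix.one_apply, smul_eq_mul, extendAssignment_left_inj hSK,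
    sum_const, card_univ, Fintype.card_fun, Fintype.card_coe, Fintype.card_fin,
    card_sdiff_of_subset hSK, nsmul_eq_mul, Nat.cast_pow, Nat.cast_ofNat, hpow]
  field_simp

end PartialTrace

theorem stmt16_general (n k s : ℕ) (hs : s < k) (hk : k ≤ n / 2)
    (ψ : (Fin n → Fin 2) → ℂ)
    (h : n.choose k - (n - s).choose (k - s) <
      Nat.card {K : Finset (Fin n) // K.card = k ∧ IsMaxMixed ψ K}) :
    ∀ S : Finset (Fin n), S.card ≤ s → IsMaxMixed ψ S := by
  classical
  intro S hS
  obtain ⟨T, hST, -, hT⟩ :=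
    exists_subsuperset_card_eq (subset_univ S) hS (by simp only [card_univ, Fintype.card_fin]; omega)
  set F := univ.filter fun K : Finset (Fin n) => #K = k ∧ IsMaxMixed ψ K
  rw [Nat.card_eq_fintype_card, Fintype.card_subtype] at h
  obtain ⟨K, hKF, hTK⟩ := exists_superset_mem_of_card_lt (F := F)
    (fun K hK => (mem_filter.1 hK).2.1) (hT ▸ hs.le) (by simpa only [Fintype.card_fin, hT])
  exact (mem_filter.1 hKF).2.2.mono_s16 (hST.trans hTK)

/-- If an `n`-qubit pure state has more than `C(n,k) - C(n-s,k-s)` maximally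
mixed `k`-party reductions (`s < k ≤ ⌊n/2⌋`), then it is `s`-uniform: every
reduction on at most `s` parties is maximally mixed. -/
theorem stmt16 (n k s : ℕ) (hs : s < k) (hk : k ≤ n / 2)
    (ψ : (Fin n → Fin 2) → ℂ)
    (hψ : ∑ c : Fin n → Fin 2, ‖ψ c‖ ^ 2 = 1)
    (h : n.choose k - (n - s).choose (k - s) <
      Nat.card {K : Finset (Fin n) // K.card = k ∧ IsMaxMixed ψ K}) :
    ∀ S : Finset (Fin n), S.card ≤ s → IsMaxMixed ψ S :=
  stmt16_general n k s hs hk ψ h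
end
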